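/- For the action of τ on the affine root lattice V of type Ã_{n−1}: τ(α_1) = α_0 + α_{n−1}, τ(α_i) = α_{i−1} for 2 ≤ i ≤ n−2, and τ(α_0 + α_{n−1}) = α_{n−2}; in other words, (α_{n−1}+α_0, α_{n−2}, α_{n−3}, …, α_1) is a cycle of order n−1 for τ. Consequently κ = τ^{n−1} fixes each of the roots α_1, …, α_{n−2} and α_0 + α_{n−1}. -/

import Mathlib

/-- The affine root lattice `V = ℤ × (Fin n → ℤ)` of type `Ã_{n-1}`; the first
coordinate records the coefficient of the basic imaginary root `δ`. -/
abbrev V (n : ℕ) : Type := ℤ × (Fin n → ℤ)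

/-- The basic imaginary root `δ = (1, 0)`. -/
def deltaV (n : ℕ) : V n := (1, 0)

/-- The index preceding `i` cyclically (i.e. `i - 1 mod n`). -/
def prevIdx {n : ℕ} (i : Fin n) : Fin n := ⟨((i : ℕ) + (n - 1)) % n, Nat.mod_lt _ i.pos⟩

/-- The simple roots, indexed `0`-based by `Fin n`: writing `f_0, …, f_{n-1}` for the
standard basis of `Fin n → ℤ` (so `e_k = f_{k-1}` in the paper's `1`-based notation),
`alphaV i = α_i = (0, e_i − e_{i+1}) = (0, f_{i-1} − f_i)` for `1 ≤ i ≤ n-1`, and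
`alphaV 0 = α_0 = (1, e_n − e_1) = (1, f_{n-1} − f_0)`. -/
def alphaV {n : ℕ} (i : Fin n) : V n :=
  (if (i : ℕ) = 0 then 1 else 0, Pi.single (prevIdx i) 1 - Pi.single i 1)

/-- The pairing of `x ∈ V` with the coroot `α_i^∨`:
`⟨(r,v), α_i^∨⟩ = v_i − v_{i+1}` for `1 ≤ i ≤ n-1` and `⟨(r,v), α_0^∨⟩ = v_n − v_1`
(in the paper's `1`-based notation). -/
def coroot {n : ℕ} (i : Fin n) (x : V n) : ℤ := x.2 (prevIdx i) - x.2 i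

/-- The reflection `s_i : V → V`, `s_i(x) = x − ⟨x, α_i^∨⟩·α_i`. -/
def sV {n : ℕ} (i : Fin n) (x : V n) : V n := x - coroot i x • alphaV i

/-- `τ = s_{n-1}∘s_{n-2}∘⋯∘s_1∘s_0` acting on `V` (the `foldl` applies `s_0` first). -/
def tauV (n : ℕ) : V n → V n := fun x => (List.finRange n).foldl (fun y i => sV i y) x

/-- `κ = τ^{n-1}` acting on `V`. -/
def kappaV (n : ℕ) : V n → V n := (tauV n)^[n - 1]

/-! For `i ≠ 0` the reflection `s_i` swaps the coordinates `i - 1` and `i` of the finite part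
and leaves the `δ`-coefficient alone, while `s_0` swaps the coordinates `n - 1` and `0` and adds
`v₀ - v_{n-1}` to it. Composing, `τ (r, v) = (r + v₀ - v_{n-1}, v ∘ c)` with `c` the cycle
`(0 1 … n-2)` (`Fin.cycleRange`). Evaluating this on the roots gives the cycle
`α_1 ↦ α_0 + α_{n-1} ↦ α_{n-2} ↦ ⋯ ↦ α_1` of length `n - 1`, which `κ = τ^{n-1}` therefore fixes
pointwise. -/

section

open Equiv Fin

variable {n : ℕ}

lemma prevIdx_val (i : Fin n) : (prevIdx i : ℕ) = if (i : ℕ) = 0 then n - 1 else i - 1 := by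
  show ((i : ℕ) + (n - 1)) % n = _
  split_ifs with h
  · simp [h]
  · rw [show (i : ℕ) + (n - 1) = (i - 1) + n by omega, Nat.add_mod_right]
    exact Nat.mod_eq_of_lt (by omega)

lemma val_cycleRange (i j : Fin n) :
    (cycleRange i j : ℕ) = if (j : ℕ) < i then (j : ℕ) + 1 else if (j : ℕ) = i then 0 else j := by
  rcases lt_or_ge i j with h | h
  · rw [cycleRange_of_gt h, if_neg (by omega), if_neg (by omega)]
  · rw [coe_cycleRange_of_le h]
    split_ifs <;> simp_all [Fin.ext_iff]; omega

lemma cycleRange_mul_swap {k : ℕ} (hk : k + 1 < n) :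
    cycleRange (⟨k, by omega⟩ : Fin n) * swap ⟨k, by omega⟩ ⟨k + 1, hk⟩
      = cycleRange ⟨k + 1, hk⟩ := by
  ext j
  simp only [Fin.ext_iff, Perm.mul_apply, swap_apply_def, apply_ite Fin.val, val_cycleRange]
  split_ifs <;> omega

lemma swap_mul_cycleRange_last (hn : 2 ≤ n) :
    swap (⟨n - 1, by omega⟩ : Fin n) ⟨0, by omega⟩ * cycleRange (⟨n - 1, by omega⟩ : Fin n)
      = cycleRange ⟨n - 2, by omega⟩ := by
  ext j
  simp only [Fin.ext_iff, Perm.mul_apply, swap_apply_def, apply_ite Fin.val, val_cycleRange]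
  split_ifs <;> first | omega | contradiction

lemma sV_eq (i : Fin n) (x : V n) :
    sV i x = (x.1 - if (i : ℕ) = 0 then coroot i x else 0, x.2 ∘ swap (prevIdx i) i) := by
  refine Prod.ext ?_ (funext fun j => ?_)
  · simp [sV, alphaV, mul_comm]
  · simp only [sV, coroot, alphaV, Prod.snd_sub, Prod.smul_snd, Pi.sub_apply, Pi.smul_apply,
      Pi.single_apply, smul_eq_mul, Function.comp_apply, swap_apply_def]
    split_ifs with hp hi hi
    · subst hp; rw [hi]; ring
    · subst hp; ring
    · subst hi; ring
    · ring

lemma foldl_sV_take_succ (x : V n) {k : ℕ} (hk : k < n) :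
    ((List.finRange n).take (k + 1)).foldl (fun y i => sV i y) x
      = (x.1 + x.2 ⟨0, by omega⟩ - x.2 ⟨n - 1, by omega⟩,
          x.2 ∘ ⇑(swap (⟨n - 1, by omega⟩ : Fin n) ⟨0, by omega⟩ * cycleRange ⟨k, hk⟩)) := by
  induction k with
  | zero =>
    have h0 : prevIdx (⟨0, hk⟩ : Fin n) = ⟨n - 1, by omega⟩ := Fin.ext (by simp [prevIdx_val])
    have hget : (List.finRange n)[0]? = some ⟨0, hk⟩ := by simp [hk]
    rw [List.take_add_one, hget, List.take_zero]
    simp only [List.nil_append, Option.toList_some, List.foldl_cons, List.foldl_nil, sV_eq,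
      coroot, h0, if_true, cycleRange_mk_zero, mul_one]
    congr 1
    ring
  | succ k ih =>
    have hk' : prevIdx (⟨k + 1, hk⟩ : Fin n) = ⟨k, by omega⟩ := Fin.ext (by simp [prevIdx_val])
    have hget : (List.finRange n)[k + 1]? = some ⟨k + 1, hk⟩ := by simp [hk]
    rw [List.take_add_one, hget, List.foldl_append, ih (by omega)]
    simp only [Option.toList_some, List.foldl_cons, List.foldl_nil, sV_eq, hk',
      Nat.add_one_ne_zero, if_false, sub_zero, Function.comp_assoc]
    rw [← Perm.coe_mul, mul_assoc, cycleRange_mul_swap]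

lemma tauV_eq (hn : 2 ≤ n) (x : V n) :
    tauV n x = (x.1 + x.2 ⟨0, by omega⟩ - x.2 ⟨n - 1, by omega⟩,
      x.2 ∘ cycleRange ⟨n - 2, by omega⟩) := by
  have hlen : (List.finRange n).take (n - 1 + 1) = List.finRange n :=
    List.take_of_length_le (by simp; omega)
  rw [tauV, ← hlen, foldl_sV_take_succ x (by omega), swap_mul_cycleRange_last hn]

lemma alphaV_fst (i : Fin n) : (alphaV i).1 = if (i : ℕ) = 0 then 1 else 0 := rfl

lemma alphaV_snd_apply (i j : Fin n) :
    (alphaV i).2 j = (if (j : ℕ) = prevIdx i then 1 else 0) - if (j : ℕ) = i then 1 else 0 := by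
  simp [alphaV, Pi.single_apply, Fin.ext_iff]

lemma tauV_alphaV_one (hn : 2 < n) :
    tauV n (alphaV ⟨1, by omega⟩) = alphaV ⟨0, by omega⟩ + alphaV ⟨n - 1, by omega⟩ := by
  refine Prod.ext ?_ (funext fun j => ?_) <;>
    simp only [tauV_eq (by omega : 2 ≤ n), Prod.fst_add, Prod.snd_add, Pi.add_apply,
      Function.comp_apply, alphaV_fst, alphaV_snd_apply, prevIdx_val, val_cycleRange] <;>
    split_ifs <;> first | contradiction | omega

lemma tauV_alphaV {i : ℕ} (hi₁ : 2 ≤ i) (hi₂ : i ≤ n - 2) :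
    tauV n (alphaV ⟨i, by omega⟩) = alphaV ⟨i - 1, by omega⟩ := by
  refine Prod.ext ?_ (funext fun j => ?_) <;>
    simp only [tauV_eq (by omega : 2 ≤ n), Function.comp_apply, alphaV_fst, alphaV_snd_apply,
      prevIdx_val, val_cycleRange] <;>
    split_ifs <;> first | contradiction | omega

lemma tauV_alphaV_zero_add_alphaV_last (hn : 2 < n) :
    tauV n (alphaV ⟨0, by omega⟩ + alphaV ⟨n - 1, by omega⟩) = alphaV ⟨n - 2, by omega⟩ := by
  refine Prod.ext ?_ (funext fun j => ?_) <;>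
    simp only [tauV_eq (by omega : 2 ≤ n), Prod.fst_add, Prod.snd_add, Pi.add_apply,
      Function.comp_apply, alphaV_fst, alphaV_snd_apply, prevIdx_val, val_cycleRange] <;>
    split_ifs <;> first | contradiction | omega

lemma iterate_tauV_alphaV {i j : ℕ} (hj : 1 ≤ j) (hji : j ≤ i) (hi : i ≤ n - 2) :
    (tauV n)^[i - j] (alphaV ⟨i, by omega⟩) = alphaV ⟨j, by omega⟩ := by
  obtain ⟨k, rfl⟩ := Nat.exists_eq_add_of_le hji
  rw [Nat.add_sub_cancel_left]
  induction k with
  | zero => rfl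
  | succ k ih =>
    rw [Function.iterate_succ_apply, ← ih (by omega) (by omega)]
    congr 1
    convert tauV_alphaV (n := n) (i := j + (k + 1)) (by omega) hi using 3
    omega

lemma kappaV_alphaV {i : ℕ} (hi₁ : 1 ≤ i) (hi₂ : i ≤ n - 2) :
    kappaV n (alphaV ⟨i, by omega⟩) = alphaV ⟨i, by omega⟩ := by
  have hn : 2 < n := by omega
  calc kappaV n (alphaV ⟨i, by omega⟩)
      = (tauV n)^[n - 2 - i] (tauV n (tauV n ((tauV n)^[i - 1] (alphaV ⟨i, by omega⟩)))) := by
        rw [kappaV, show n - 1 = (n - 2 - i) + 1 + 1 + (i - 1) by omega,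
          Function.iterate_add_apply, Function.iterate_add_apply, Function.iterate_add_apply,
          Function.iterate_one]
    _ = alphaV ⟨i, by omega⟩ := by
        rw [iterate_tauV_alphaV le_rfl hi₁ hi₂, tauV_alphaV_one hn,
          tauV_alphaV_zero_add_alphaV_last hn, iterate_tauV_alphaV hi₁ hi₂ le_rfl]

lemma kappaV_alphaV_zero_add_alphaV_last (hn : 2 < n) :
    kappaV n (alphaV ⟨0, by omega⟩ + alphaV ⟨n - 1, by omega⟩)
      = alphaV ⟨0, by omega⟩ + alphaV ⟨n - 1, by omega⟩ := by
  calc kappaV n (alphaV ⟨0, by omega⟩ + alphaV ⟨n - 1, by omega⟩)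
      = tauV n ((tauV n)^[n - 2 - 1]
          (tauV n (alphaV ⟨0, by omega⟩ + alphaV ⟨n - 1, by omega⟩))) := by
        rw [kappaV, show (tauV n)^[n - 1] = (tauV n)^[1 + (n - 2 - 1) + 1] by congr 1; omega,
          Function.iterate_add_apply, Function.iterate_add_apply, Function.iterate_one]
    _ = alphaV ⟨0, by omega⟩ + alphaV ⟨n - 1, by omega⟩ := by
        rw [tauV_alphaV_zero_add_alphaV_last hn, iterate_tauV_alphaV le_rfl (by omega) le_rfl,
          tauV_alphaV_one hn]

end

/-- `τ(α_1) = α_0 + α_{n-1}`; `τ(α_i) = α_{i-1}` for `2 ≤ i ≤ n-2`;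
`τ(α_0 + α_{n-1}) = α_{n-2}`; and `κ = τ^{n-1}` fixes `α_1, …, α_{n-2}` and
`α_0 + α_{n-1}`. -/
theorem stmt14 {n : ℕ} (hn : 3 ≤ n) :
    tauV n (alphaV (⟨1, by omega⟩ : Fin n))
        = alphaV (⟨0, by omega⟩ : Fin n) + alphaV (⟨n - 1, by omega⟩ : Fin n) ∧
      (∀ i : ℕ, ∀ _ : 2 ≤ i, ∀ _ : i ≤ n - 2,
        tauV n (alphaV (⟨i, by omega⟩ : Fin n)) = alphaV (⟨i - 1, by omega⟩ : Fin n)) ∧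
      tauV n (alphaV (⟨0, by omega⟩ : Fin n) + alphaV (⟨n - 1, by omega⟩ : Fin n))
        = alphaV (⟨n - 2, by omega⟩ : Fin n) ∧
      (∀ i : ℕ, ∀ _ : 1 ≤ i, ∀ _ : i ≤ n - 2,
        kappaV n (alphaV (⟨i, by omega⟩ : Fin n)) = alphaV (⟨i, by omega⟩ : Fin n)) ∧
      kappaV n (alphaV (⟨0, by omega⟩ : Fin n) + alphaV (⟨n - 1, by omega⟩ : Fin n))
        = alphaV (⟨0, by omega⟩ : Fin n) + alphaV (⟨n - 1, by omega⟩ : Fin n) := by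
  exact ⟨tauV_alphaV_one hn, fun _ hi₁ hi₂ => tauV_alphaV hi₁ hi₂,
    tauV_alphaV_zero_add_alphaV_last hn, fun _ hi₁ hi₂ => kappaV_alphaV hi₁ hi₂,
    kappaV_alphaV_zero_add_alphaV_last hn⟩
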